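/- arXiv:1601.02127 — 9 statements merged into one kernel-verified Lean document; each statement's English description precedes it below -/
import Mathlib

section
/- For every set function ξ on N and every subset S ⊆ N, the Fourier transform satisfies ξ̂(S) = (−1)^{|S|} Σ_{K : S ⊆ K ⊆ N} (1/2^{|K|}) m^ξ(K), where m^ξ is the Möbius transform of ξ. -/
open MeasureTheory Finset

/-- The uniform probability measure on the unit cube `[0,1]^n`. -/
noncomputable def unifCube (n : ℕ) : Measure (Fin n → ℝ) :=
  Measure.pi fun _ => volume.restrict (Set.Icc 0 1)

/-- The Möbius transform of a set function. -/
noncomputable def mobius {n : ℕ} (ξ : Finset (Fin n) → ℝ) (S : Finset (Fin n)) : ℝ :=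
  ∑ T ∈ S.powerset, (-1 : ℝ) ^ (S \ T).card * ξ T

/-- The Fourier transform of a set function. -/
noncomputable def fourierT {n : ℕ} (ξ : Finset (Fin n) → ℝ) (S : Finset (Fin n)) : ℝ :=
  (1 / 2 ^ n : ℝ) * ∑ T : Finset (Fin n), (-1 : ℝ) ^ (S ∩ T).card * ξ T

/-- The Banzhaf interaction transform of a set function. -/
noncomputable def banzhaf {n : ℕ} (ξ : Finset (Fin n) → ℝ) (S : Finset (Fin n)) : ℝ :=
  (1 / 2 : ℝ) ^ (n - S.card) * ∑ K : Finset (Fin n), (-1 : ℝ) ^ (S \ K).card * ξ K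

/-- The multilinear (Owen) extension associated with coefficients `m`. -/
noncomputable def fOw {n : ℕ} (m : Finset (Fin n) → ℝ) (x : Fin n → ℝ) : ℝ :=
  ∑ T : Finset (Fin n), m T * ∏ i ∈ T, x i

/-- A capacity: vanishes on the empty set and is monotone. -/
def Capacity {n : ℕ} (μ : Finset (Fin n) → ℝ) : Prop :=
  μ ∅ = 0 ∧ ∀ S T : Finset (Fin n), S ⊆ T → μ S ≤ μ T

/-- The ANOVA component of `f` associated with the subset `S`. -/
noncomputable def anova {n : ℕ} (f : (Fin n → ℝ) → ℝ) (S : Finset (Fin n))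
    (z : Fin n → ℝ) : ℝ :=
  ∑ T ∈ S.powerset, (-1 : ℝ) ^ (S \ T).card *
    ∫ y, f (fun i => if i ∈ T then z i else y i) ∂unifCube n

/-- The Choquet integral (Lovász extension) of a 2-additive capacity with
Möbius transform `m`. -/
noncomputable def fLo {n : ℕ} (m : Finset (Fin n) → ℝ) (z : Fin n → ℝ) : ℝ :=
  ∑ i, m {i} * z i +
    ∑ i, ∑ j ∈ Finset.univ.filter (fun j => i < j), m {i, j} * min (z i) (z j)

/-! Expanding `mobius ξ K` and exchanging the two sums, the coefficient of `ξ T` becomes a sum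
over `K ⊇ S ∪ T`. Writing `K = (S ∪ T) ∪ V`, it is the binomial sum of `(-1/2) ^ #V`, which
collapses to `(-1) ^ #(S \ T) / 2 ^ n`; the sign `(-1) ^ #S` then turns `(-1) ^ #(S \ T)` into
`(-1) ^ #(S ∩ T)`. -/

section PowersetSums

variable {α R : Type*} [DecidableEq α] [CommRing R]

theorem neg_one_pow_card_mul_neg_one_pow_card_sdiff (S T : Finset α) :
    (-1 : R) ^ #S * (-1) ^ #(S \ T) = (-1) ^ #(S ∩ T) := by
  rw [← card_inter_add_card_sdiff S T, pow_add, mul_assoc, ← mul_pow]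
  simp

theorem sum_Icc_pow_card_mul_neg_one_pow_card_sdiff {T A U : Finset α} (hTA : T ⊆ A)
    (hAU : A ⊆ U) (x : R) :
    ∑ K ∈ Icc A U, x ^ #K * (-1) ^ #(K \ T) =
      x ^ #A * (-1) ^ #(A \ T) * (1 - x) ^ #(U \ A) := by
  have hdisj : ∀ V ∈ (U \ A).powerset, Disjoint A V := fun V hV =>
    disjoint_of_subset_right (mem_powerset.1 hV) disjoint_sdiff
  rw [Icc_eq_image_powerset hAU, sum_image fun V hV W hW hVW => by
    rw [← union_sdiff_cancel_left (hdisj V hV), ← union_sdiff_cancel_left (hdisj W hW)]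
    exact congrArg (· \ A) hVW]
  have hsummand : ∀ V ∈ (U \ A).powerset,
      x ^ #(A ∪ V) * (-1) ^ #((A ∪ V) \ T) = x ^ #A * (-1) ^ #(A \ T) * (-x) ^ #V := by
    intro V hV
    have hVT : Disjoint V T := disjoint_of_subset_right hTA (hdisj V hV).symm
    rw [union_sdiff_distrib, sdiff_eq_self_of_disjoint hVT,
      card_union_of_disjoint (hdisj V hV),
      card_union_of_disjoint (disjoint_of_subset_left sdiff_subset (hdisj V hV)),
      neg_pow]
    ring
  rw [sum_congr rfl hsummand, ← mul_sum]
  simpa [neg_add_eq_sub] using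
    congrArg (x ^ #A * (-1) ^ #(A \ T) * ·) (sum_pow_mul_eq_add_pow (-x) 1 (U \ A))

end PowersetSums

/-- The Fourier transform in terms of the Möbius transform:
`ξ̂(S) = (-1)^{|S|} ∑_{K ⊇ S} (1/2^{|K|}) m^ξ(K)`. -/
theorem fourier_eq_mobius (n : ℕ) (ξ : Finset (Fin n) → ℝ) (S : Finset (Fin n)) :
    fourierT ξ S =
      (-1 : ℝ) ^ S.card *
        ∑ K ∈ Finset.univ.filter (fun K => S ⊆ K), (1 / 2 ^ K.card : ℝ) * mobius ξ K := by
  have hcoef (T : Finset (Fin n)) :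
      ∑ K ∈ Icc (S ∪ T) univ, (1 / 2 : ℝ) ^ #K * (-1) ^ #(K \ T) =
        (1 / 2) ^ n * (-1) ^ #(S \ T) := by
    rw [sum_Icc_pow_card_mul_neg_one_pow_card_sdiff subset_union_right (subset_univ _),
      union_sdiff_right, ← compl_eq_univ_sdiff, show (1 : ℝ) - 1 / 2 = 1 / 2 by norm_num,
      mul_right_comm, ← pow_add, card_add_card_compl, Fintype.card_fin]
  have hfilter : univ.filter (fun K => S ⊆ K) = Icc S univ := by
    rw [Icc_eq_filter_powerset, powerset_univ]
  symm
  calc (-1) ^ #S * ∑ K ∈ univ.filter (fun K => S ⊆ K), 1 / 2 ^ #K * mobius ξ K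
      = (-1) ^ #S * ∑ K ∈ Icc S univ, ∑ T ∈ K.powerset,
          (1 / 2 : ℝ) ^ #K * (-1) ^ #(K \ T) * ξ T := by
        simp only [hfilter, mobius, mul_sum, one_div_pow, mul_assoc]
    _ = (-1) ^ #S * ∑ T, ∑ K ∈ Icc (S ∪ T) univ,
          (1 / 2 : ℝ) ^ #K * (-1) ^ #(K \ T) * ξ T := by
        rw [sum_comm' (t' := univ) (s' := fun T => Icc (S ∪ T) univ) fun K T => by
          simp [union_subset_iff]]
    _ = fourierT ξ S := by
        rw [fourierT, mul_sum, mul_sum]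
        refine sum_congr rfl fun T _ => ?_
        rw [← sum_mul, hcoef, one_div_pow, ← neg_one_pow_card_mul_neg_one_pow_card_sdiff S T]
        ring
end

section
/- For every set function ξ on N and every subset S ⊆ N, the Fourier transform and the Banzhaf interaction transform are related by ξ̂(S) = (−1/2)^{|S|} · I_B^ξ(S). -/
open MeasureTheory Finset

/-- The Fourier transform and the Banzhaf interaction transform are related by
`ξ̂(S) = (-1/2)^{|S|} I_B^ξ(S)`. -/
theorem fourier_eq_banzhaf (n : ℕ) (ξ : Finset (Fin n) → ℝ) (S : Finset (Fin n)) :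
    fourierT ξ S = (-1 / 2 : ℝ) ^ S.card * banzhaf ξ S := by
  unfold fourierT banzhaf
  have hS : S.card ≤ n := by simpa using card_le_card (subset_univ S)
  simp only [mul_sum]
  refine Finset.sum_congr rfl fun T _ => ?_
  have hc : (S ∩ T).card + (S \ T).card = S.card := card_inter_add_card_sdiff S T
  have h2 : ((1:ℝ)/2) ^ S.card * ((1:ℝ)/2) ^ (n - S.card) = (1/2)^n := by
    rw [← pow_add, Nat.add_sub_cancel' hS]
  have h1 : ((-1:ℝ)) ^ (S ∩ T).card * ((-1:ℝ)) ^ (S \ T).card = (-1)^S.card := by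
    rw [← pow_add, hc]
  have hn : ((-1:ℝ)/2) ^ S.card = (-1:ℝ)^S.card * (1/2:ℝ)^S.card := by
    rw [← mul_pow]; norm_num
  have hsq : ((-1:ℝ))^(S \ T).card * (-1:ℝ)^(S \ T).card = 1 := by
    rw [← pow_add, ← two_mul, pow_mul]; norm_num
  calc (1 / 2 ^ n : ℝ) * ((-1) ^ (S ∩ T).card * ξ T)
      = ((1/2:ℝ)^n) * ((-1) ^ (S ∩ T).card * ((-1:ℝ))^(S \ T).card * (-1:ℝ)^(S \ T).card * ξ T) := by
        rw [mul_assoc ((-1:ℝ)^(S ∩ T).card), hsq, mul_one, div_pow, one_pow]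
    _ = (-1 / 2 : ℝ) ^ S.card * ((1 / 2 : ℝ) ^ (n - S.card) * ((-1) ^ (S \ T).card * ξ T)) := by
        rw [hn, ← h2, ← h1]; ring
end

section
/- For every set function ξ on N and every subset S ⊆ N, the Möbius transform is recovered from the Fourier transform by m^ξ(S) = (−2)^{|S|} Σ_{T : S ⊆ T ⊆ N} ξ̂(T). -/
open MeasureTheory Finset

/-! Expanding `ξ̂` and exchanging the sums, the coefficient of `ξ K` is the character sum
`∑_{T ⊇ S} (-1)^{|T ∩ K|}`. Writing the sign as a product over `T`, this sum factors as
`∏_i (χ_K i + [i ∉ S])` with `χ_K i = ±1`, which vanishes unless `K ⊆ S`, and then equals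
`(-1)^{|K|} 2^{n - |S|}`. -/

section
variable {ι R : Type*} [DecidableEq ι]

theorem Finset.neg_one_pow_card_inter [CommRing R] (T K : Finset ι) :
    (-1 : R) ^ #(T ∩ K) = ∏ i ∈ T, if i ∈ K then -1 else 1 := by
  rw [prod_ite_mem, prod_const]

theorem Finset.neg_one_pow_card_sdiff [Ring R] {K S : Finset ι} (h : K ⊆ S) :
    (-1 : R) ^ #(S \ K) = (-1) ^ #S * (-1) ^ #K := by
  rw [← card_sdiff_add_card_eq_card h, pow_add, mul_assoc, ← pow_add, ← two_mul, pow_mul]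
  simp

variable [Fintype ι]

theorem Finset.sum_superset_prod [CommSemiring R] (S : Finset ι) (f : ι → R) :
    ∑ T ∈ univ.filter (S ⊆ ·), ∏ i ∈ T, f i = ∏ i, (f i + if i ∉ S then 1 else 0) := by
  rw [prod_add, powerset_univ, sum_filter]
  refine sum_congr rfl fun T _ => ?_
  rw [prod_boole]
  simp [subset_iff, not_imp_not]

theorem Finset.sum_superset_neg_one_pow_card_inter [CommRing R] (S K : Finset ι) :
    ∑ T ∈ univ.filter (S ⊆ ·), (-1 : R) ^ #(T ∩ K) =
      if K ⊆ S then (-1) ^ #K * 2 ^ #Sᶜ else 0 := by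
  simp_rw [neg_one_pow_card_inter, sum_superset_prod]
  split_ifs with hKS
  · rw [← prod_mul_prod_compl S]
    congr 1
    · rw [← inter_eq_right.2 hKS, neg_one_pow_card_inter]
      exact prod_congr rfl fun i hi => by simp [hi]
    · rw [← prod_const]
      exact prod_congr rfl fun i hi => by
        have hiK : i ∉ K := fun h => mem_compl.1 hi (hKS h)
        simp [mem_compl.1 hi, hiK, one_add_one_eq_two]
  · obtain ⟨i, hiK, hiS⟩ := not_subset.1 hKS
    exact prod_eq_zero (mem_univ i) (by simp [hiK, hiS])

end

/-- The Möbius transform is recovered from the Fourier transform by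
`m^ξ(S) = (-2)^{|S|} ∑_{T ⊇ S} ξ̂(T)`. -/
theorem mobius_eq_fourier (n : ℕ) (ξ : Finset (Fin n) → ℝ) (S : Finset (Fin n)) :
    mobius ξ S =
      (-2 : ℝ) ^ S.card * ∑ T ∈ Finset.univ.filter (fun T => S ⊆ T), fourierT ξ T := by
  have h2n : (2 : ℝ) ^ #S * 2 ^ #Sᶜ = 2 ^ n := by
    rw [← pow_add, card_add_card_compl, Fintype.card_fin]
  symm
  calc (-2 : ℝ) ^ #S * ∑ T ∈ univ.filter (S ⊆ ·), fourierT ξ T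
      = (-2) ^ #S / 2 ^ n * ∑ K, (∑ T ∈ univ.filter (S ⊆ ·), (-1) ^ #(T ∩ K)) * ξ K := by
        simp_rw [fourierT, ← mul_sum, sum_mul]
        rw [sum_comm]; ring
    _ = (-2) ^ #S / 2 ^ n * ∑ K ∈ S.powerset, (-1) ^ #K * 2 ^ #Sᶜ * ξ K := by
        simp_rw [sum_superset_neg_one_pow_card_inter, ite_mul, zero_mul, ← sum_filter,
          filter_subset_univ]
    _ = ∑ K ∈ S.powerset, (-1) ^ #S * (-1) ^ #K * ξ K := by
        rw [mul_sum]
        refine sum_congr rfl fun K _ => ?_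
        rw [← h2n, neg_pow (2 : ℝ)]
        field_simp
    _ = mobius ξ S :=
        sum_congr rfl fun K hK => by rw [neg_one_pow_card_sdiff (mem_powerset.1 hK)]
end

section
/- For every set function ξ on N and every subset S ⊆ N, the Banzhaf interaction transform is expressed in terms of the Möbius transform by I_B^ξ(S) = Σ_{K : S ⊆ K ⊆ N} (1/2)^{|K \ S|} m^ξ(K). -/
open MeasureTheory Finset

lemma banzhaf_inner_sum (n : ℕ) (S T : Finset (Fin n)) :
    ∑ K ∈ Finset.univ.filter (fun K => S ⊆ K ∧ T ⊆ K),
      (1 / 2 : ℝ) ^ (K \ S).card * (-1 : ℝ) ^ (K \ T).card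
      = (1 / 2 : ℝ) ^ (n - S.card) * (-1 : ℝ) ^ (S \ T).card := by
  classical
  set U := S ∪ T with hU
  have hSU : S ⊆ U := subset_union_left
  have hTU : T ⊆ U := subset_union_right
  have step1 : ∑ K ∈ Finset.univ.filter (fun K => S ⊆ K ∧ T ⊆ K),
      (1 / 2 : ℝ) ^ (K \ S).card * (-1 : ℝ) ^ (K \ T).card
      = ∑ A ∈ Uᶜ.powerset,
        (1 / 2 : ℝ) ^ ((T \ S).card + A.card) * (-1 : ℝ) ^ ((S \ T).card + A.card) := by
    refine Finset.sum_nbij' (fun K => K \ U) (fun A => A ∪ U) ?_ ?_ ?_ ?_ ?_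
    · intro K hK
      simp only [mem_filter, mem_univ, true_and] at hK
      rw [mem_powerset]
      intro x hx
      simp only [mem_sdiff] at hx
      simp [hx.2]
    · intro A hA
      simp only [mem_powerset] at hA
      simp only [mem_filter, mem_univ, true_and]
      exact ⟨hSU.trans subset_union_right, hTU.trans subset_union_right⟩
    · intro K hK
      simp only [mem_filter, mem_univ, true_and] at hK
      show K \ U ∪ U = K
      exact sdiff_union_of_subset (union_subset hK.1 hK.2)
    · intro A hA
      simp only [mem_powerset] at hA
      have hdisj : Disjoint A U :=
        disjoint_left.2 fun x hxA hxU => by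
          have := hA hxA; simp only [mem_compl] at this; exact this hxU
      show (A ∪ U) \ U = A
      exact union_sdiff_cancel_right hdisj
    · intro K hK
      simp only [mem_filter, mem_univ, true_and] at hK
      have hUK : U ⊆ K := union_subset hK.1 hK.2
      have h1 : K \ S = (U \ S) ∪ (K \ U) := by
        ext x
        simp only [mem_sdiff, mem_union]
        constructor
        · rintro ⟨hxK, hxS⟩
          by_cases hxU : x ∈ U
          · exact Or.inl ⟨hxU, hxS⟩
          · exact Or.inr ⟨hxK, hxU⟩
        · rintro (⟨hxU, hxS⟩ | ⟨hxK, hxU⟩)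
          · exact ⟨hUK hxU, hxS⟩
          · exact ⟨hxK, fun hS => hxU (hSU hS)⟩
      have h2 : K \ T = (U \ T) ∪ (K \ U) := by
        ext x
        simp only [mem_sdiff, mem_union]
        constructor
        · rintro ⟨hxK, hxT⟩
          by_cases hxU : x ∈ U
          · exact Or.inl ⟨hxU, hxT⟩
          · exact Or.inr ⟨hxK, hxU⟩
        · rintro (⟨hxU, hxT⟩ | ⟨hxK, hxU⟩)
          · exact ⟨hUK hxU, hxT⟩
          · exact ⟨hxK, fun hT => hxU (hTU hT)⟩
      have hd1 : Disjoint (U \ S) (K \ U) :=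
        disjoint_left.2 fun x hx hx' => (mem_sdiff.1 hx').2 (mem_sdiff.1 hx).1
      have hd2 : Disjoint (U \ T) (K \ U) :=
        disjoint_left.2 fun x hx hx' => (mem_sdiff.1 hx').2 (mem_sdiff.1 hx).1
      have hUS : U \ S = T \ S := by rw [hU, union_sdiff_left]
      have hUT : U \ T = S \ T := by rw [hU, union_sdiff_right]
      rw [h1, h2, card_union_of_disjoint hd1, card_union_of_disjoint hd2, hUS, hUT]
  rw [step1]
  have expand : ∀ A : Finset (Fin n),
      (1 / 2 : ℝ) ^ ((T \ S).card + A.card) * (-1 : ℝ) ^ ((S \ T).card + A.card)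
      = ((1 / 2 : ℝ) ^ (T \ S).card * (-1 : ℝ) ^ (S \ T).card)
        * ((- (1/2) : ℝ) ^ A.card * 1 ^ (Uᶜ.card - A.card)) := by
    intro A
    rw [pow_add, pow_add, one_pow,
      show (-(1/2) : ℝ) ^ A.card = (-1 : ℝ) ^ A.card * (1/2 : ℝ) ^ A.card from by
        rw [← neg_pow]]
    ring
  rw [Finset.sum_congr rfl (fun A _ => expand A), ← Finset.mul_sum,
    Finset.sum_pow_mul_eq_add_pow]
  have hcard : (T \ S).card + Uᶜ.card = n - S.card := by
    have h1 : (T \ S).card + S.card = U.card := by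
      rw [hU, union_comm]; exact card_sdiff_add_card ..
    have h2 : Uᶜ.card = n - U.card := by
      rw [card_compl, Fintype.card_fin]
    have h3 : U.card ≤ n := by
      simpa using card_le_card (subset_univ U)
    omega
  have h12 : (-(1/2 : ℝ) + 1) = 1/2 := by norm_num
  rw [h12, mul_right_comm, ← pow_add, hcard]

/-- The Banzhaf interaction transform in terms of the Möbius transform:
`I_B^ξ(S) = ∑_{K ⊇ S} (1/2)^{|K \ S|} m^ξ(K)`. -/
theorem banzhaf_eq_mobius (n : ℕ) (ξ : Finset (Fin n) → ℝ) (S : Finset (Fin n)) :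
    banzhaf ξ S =
      ∑ K ∈ Finset.univ.filter (fun K => S ⊆ K), (1 / 2 : ℝ) ^ (K \ S).card * mobius ξ K := by
  classical
  have swap :
      ∑ K ∈ Finset.univ.filter (fun K => S ⊆ K), (1 / 2 : ℝ) ^ (K \ S).card * mobius ξ K
      = ∑ T : Finset (Fin n), ∑ K ∈ Finset.univ.filter (fun K => S ⊆ K ∧ T ⊆ K),
          (1 / 2 : ℝ) ^ (K \ S).card * ((-1 : ℝ) ^ (K \ T).card * ξ T) := by
    simp only [mobius, Finset.mul_sum]
    refine Finset.sum_comm' ?_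
    intro K T
    simp [mem_powerset, and_comm]
  calc banzhaf ξ S
      = ∑ T : Finset (Fin n),
          ((1 / 2 : ℝ) ^ (n - S.card) * (-1 : ℝ) ^ (S \ T).card) * ξ T := by
        rw [banzhaf, Finset.mul_sum]
        exact Finset.sum_congr rfl fun T _ => by ring
    _ = ∑ T : Finset (Fin n),
          (∑ K ∈ Finset.univ.filter (fun K => S ⊆ K ∧ T ⊆ K),
            (1 / 2 : ℝ) ^ (K \ S).card * (-1 : ℝ) ^ (K \ T).card) * ξ T := by
        refine Finset.sum_congr rfl fun T _ => ?_
        rw [banzhaf_inner_sum]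
    _ = _ := by
        rw [swap]
        refine Finset.sum_congr rfl fun T _ => ?_
        rw [Finset.sum_mul]
        exact Finset.sum_congr rfl fun K _ => by ring
end

section
/- For every set function ξ on N and every subset S ⊆ N, the Möbius transform is recovered from the Banzhaf interaction transform by m^ξ(S) = Σ_{K : S ⊆ K ⊆ N} (−1/2)^{|K \ S|} I_B^ξ(K). -/
open MeasureTheory Finset

/-- The Möbius transform is recovered from the Banzhaf interaction transform by
`m^ξ(S) = ∑_{K ⊇ S} (-1/2)^{|K \ S|} I_B^ξ(K)`. -/
theorem mobius_eq_banzhaf (n : ℕ) (ξ : Finset (Fin n) → ℝ) (S : Finset (Fin n)) :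
    mobius ξ S =
      ∑ K ∈ Finset.univ.filter (fun K => S ⊆ K), (-1 / 2 : ℝ) ^ (K \ S).card * banzhaf ξ K := by
  classical
  -- inner sign sum
  have hpow : ∀ T : Finset (Fin n),
      ∑ A ∈ Sᶜ.powerset, (-1 : ℝ) ^ (A ∩ T).card
        = if T ⊆ S then (2 : ℝ) ^ (n - S.card) else 0 := by
    intro T
    have h1 : ∀ A : Finset (Fin n),
        (-1 : ℝ) ^ (A ∩ T).card = ∏ i ∈ A, (if i ∈ T then (-1 : ℝ) else 1) := by
      intro A
      rw [Finset.prod_ite, Finset.prod_const, Finset.prod_const, one_pow, mul_one,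
        Finset.filter_mem_eq_inter]
    simp_rw [h1]
    have h2 := Finset.prod_add (fun i => if i ∈ T then (-1 : ℝ) else 1) (fun _ => (1 : ℝ)) Sᶜ
    simp only [Finset.prod_const_one, mul_one] at h2
    rw [← h2]
    by_cases hTS : T ⊆ S
    · rw [if_pos hTS]
      have hc : ∀ i ∈ Sᶜ, ((if i ∈ T then (-1 : ℝ) else 1) + 1) = 2 := by
        intro i hi
        have : i ∉ T := fun h => (Finset.mem_compl.mp hi) (hTS h)
        rw [if_neg this]; norm_num
      rw [Finset.prod_congr rfl hc, Finset.prod_const, Finset.card_compl, Fintype.card_fin]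
    · rw [if_neg hTS]
      obtain ⟨i, hiT, hiS⟩ := Finset.not_subset.mp hTS
      refine Finset.prod_eq_zero (Finset.mem_compl.mpr hiS) ?_
      rw [if_pos hiT]; norm_num
  -- reindex K = S ∪ A
  have step1 : ∑ K ∈ Finset.univ.filter (fun K => S ⊆ K),
        (-1 / 2 : ℝ) ^ (K \ S).card * banzhaf ξ K
      = ∑ A ∈ Sᶜ.powerset, (-1 / 2 : ℝ) ^ A.card * banzhaf ξ (S ∪ A) := by
    refine Finset.sum_nbij' (fun K => K \ S) (fun A => S ∪ A) ?_ ?_ ?_ ?_ ?_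
    · intro K hK
      simp only [Finset.mem_filter] at hK
      simp only [Finset.mem_powerset]
      intro i hi
      simp only [Finset.mem_sdiff] at hi
      exact Finset.mem_compl.mpr hi.2
    · intro A hA
      simp only [Finset.mem_powerset] at hA
      simp [Finset.subset_union_left]
    · intro K hK
      simp only [Finset.mem_filter] at hK
      exact Finset.union_sdiff_of_subset hK.2
    · intro A hA
      simp only [Finset.mem_powerset] at hA
      have : Disjoint S A := Finset.disjoint_right.mpr fun i hi =>
        Finset.mem_compl.mp (hA hi)
      exact Finset.union_sdiff_cancel_left this
    · intro K hK
      simp only [Finset.mem_filter] at hK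
      rw [Finset.union_sdiff_of_subset hK.2]
  rw [step1]
  -- termwise simplification
  have step2 : ∀ A ∈ Sᶜ.powerset,
      (-1 / 2 : ℝ) ^ A.card * banzhaf ξ (S ∪ A)
        = ∑ T : Finset (Fin n), (1 / 2 : ℝ) ^ (n - S.card) *
            ((-1 : ℝ) ^ (S \ T).card * ((-1 : ℝ) ^ (A ∩ T).card * ξ T)) := by
    intro A hA
    simp only [Finset.mem_powerset] at hA
    have hdisj : Disjoint S A := Finset.disjoint_right.mpr fun i hi =>
      Finset.mem_compl.mp (hA hi)
    have hcardU : (S ∪ A).card = S.card + A.card := Finset.card_union_of_disjoint hdisj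
    have hle : S.card + A.card ≤ n := by
      rw [← hcardU]
      simpa using Finset.card_le_card (Finset.subset_univ (S ∪ A))
    have hhalf : (1 / 2 : ℝ) ^ A.card * (1 / 2 : ℝ) ^ (n - (S ∪ A).card)
        = (1 / 2 : ℝ) ^ (n - S.card) := by
      rw [← pow_add, hcardU]; congr 1; omega
    unfold banzhaf
    rw [Finset.mul_sum, Finset.mul_sum]
    refine Finset.sum_congr rfl fun T _ => ?_
    have hdisjT : Disjoint (S \ T) (A \ T) :=
      hdisj.mono (Finset.sdiff_subset) (Finset.sdiff_subset)
    have hsign : (-1 : ℝ) ^ A.card * (-1 : ℝ) ^ ((S ∪ A) \ T).card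
        = (-1 : ℝ) ^ (S \ T).card * (-1 : ℝ) ^ (A ∩ T).card := by
      rw [Finset.union_sdiff_distrib, Finset.card_union_of_disjoint hdisjT, pow_add,
        ← Finset.card_sdiff_add_card_inter A T, pow_add]
      have h2 : (-1 : ℝ) ^ (A \ T).card * (-1 : ℝ) ^ (A \ T).card = 1 := by
        rw [← pow_add, ← two_mul, pow_mul]; norm_num
      linear_combination ((-1 : ℝ) ^ (A ∩ T).card * (-1 : ℝ) ^ (S \ T).card) * h2
    have hsplit : (-1 / 2 : ℝ) = (-1) * (1 / 2) := by norm_num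
    rw [hsplit, mul_pow]
    calc (-1 : ℝ) ^ A.card * (1 / 2 : ℝ) ^ A.card *
          ((1 / 2 : ℝ) ^ (n - (S ∪ A).card) * ((-1 : ℝ) ^ ((S ∪ A) \ T).card * ξ T))
        = ((-1 : ℝ) ^ A.card * (-1 : ℝ) ^ ((S ∪ A) \ T).card) *
            (((1 / 2 : ℝ) ^ A.card * (1 / 2 : ℝ) ^ (n - (S ∪ A).card)) * ξ T) := by ring
      _ = _ := by rw [hsign, hhalf]; ring
  rw [Finset.sum_congr rfl step2, Finset.sum_comm]
  -- evaluate inner sum over A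
  have step3 : ∀ T : Finset (Fin n),
      ∑ A ∈ Sᶜ.powerset, (1 / 2 : ℝ) ^ (n - S.card) *
          ((-1 : ℝ) ^ (S \ T).card * ((-1 : ℝ) ^ (A ∩ T).card * ξ T))
        = if T ⊆ S then (1 / 2 : ℝ) ^ (n - S.card) * ((2 : ℝ) ^ (n - S.card) *
            ((-1 : ℝ) ^ (S \ T).card * ξ T)) else 0 := by
    intro T
    have : ∑ A ∈ Sᶜ.powerset, (1 / 2 : ℝ) ^ (n - S.card) *
          ((-1 : ℝ) ^ (S \ T).card * ((-1 : ℝ) ^ (A ∩ T).card * ξ T))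
        = (1 / 2 : ℝ) ^ (n - S.card) * ((-1 : ℝ) ^ (S \ T).card * ξ T) *
            ∑ A ∈ Sᶜ.powerset, (-1 : ℝ) ^ (A ∩ T).card := by
      rw [Finset.mul_sum]
      exact Finset.sum_congr rfl fun A _ => by ring
    rw [this, hpow T]
    by_cases hTS : T ⊆ S
    · rw [if_pos hTS, if_pos hTS]; ring
    · rw [if_neg hTS, if_neg hTS, mul_zero]
  rw [Finset.sum_congr rfl fun T _ => step3 T, ← Finset.sum_filter]
  have hfilt : Finset.univ.filter (fun T : Finset (Fin n) => T ⊆ S) = S.powerset := by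
    ext T; simp
  rw [hfilt]
  unfold mobius
  refine Finset.sum_congr rfl fun T _ => ?_
  have h1 : (1 / 2 : ℝ) ^ (n - S.card) * (2 : ℝ) ^ (n - S.card) = 1 := by
    rw [← mul_pow]; norm_num
  calc (-1 : ℝ) ^ (S \ T).card * ξ T
      = ((1 / 2 : ℝ) ^ (n - S.card) * (2 : ℝ) ^ (n - S.card)) *
          ((-1 : ℝ) ^ (S \ T).card * ξ T) := by rw [h1]; ring
    _ = _ := by ring
end

section
/- (Theorem 1, Sobol' index formula) Let f^Ow be the multilinear extension of a capacity μ on N. For every nonempty subset S ⊆ N, the nonnormalized Sobol' index of S, namely the variance Var[f_S] = ∫_{[0,1]^S} f_S(z_S)^2 dz_S of the ANOVA component f_S of f^Ow, equals (1/3^{|S|}) · (μ̂(S))^2, where μ̂ is the Fourier transform of μ. -/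
open MeasureTheory Finset

/-! Writing the Owen extension of `μ` as `∑ K, μ K * ∏_{i ∈ K} x i * ∏_{i ∉ K} (1 - x i)`, every
summand is a product of one-variable functions, each with mean `1/2` on `[0,1]`. The ANOVA
component of a product `∏ g i (x i)` is `∏_{i ∈ S} (g i (z i) - ∫ g i) * ∏_{i ∉ S} ∫ g i`, so that
of the Owen extension is `banzhaf μ S * ∏_{i ∈ S} (z i - 1/2)`. Since `∫₀¹ (t - 1/2)² = 1/12` and
`banzhaf μ S = (-2)^|S| μ̂(S)`, its square integrates to `4^|S| μ̂(S)² / 12^|S|`. -/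

section Combinatorics

variable {ι R : Type*} [DecidableEq ι] [CommRing R]

lemma prod_ite_mem_one_neg_one (s K : Finset ι) :
    ∏ i ∈ s, (if i ∈ K then 1 else -1 : R) = (-1) ^ #(s \ K) := by
  rw [prod_ite, prod_const_one, one_mul, prod_const, filter_notMem_eq_sdiff]

lemma prod_ite_mem_one_sub [Fintype ι] (K : Finset ι) (x : ι → R) :
    ∏ i, (if i ∈ K then x i else 1 - x i) =
      ∑ U with K ⊆ U, (-1) ^ #(U \ K) * ∏ i ∈ U, x i := by
  have hsplit : ∀ i, (if i ∈ K then x i else 1 - x i) =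
      (if i ∈ K then 1 else -1) * x i + (if i ∈ K then 0 else 1) := by
    intro i; split_ifs <;> ring
  simp_rw [hsplit]
  rw [prod_add, powerset_univ, sum_filter]
  refine sum_congr rfl fun U _ => ?_
  rw [prod_mul_distrib, prod_ite_mem_one_neg_one]
  by_cases hKU : K ⊆ U
  · rw [if_pos hKU, prod_eq_one fun i hi => if_neg fun hiK => (mem_sdiff.1 hi).2 (hKU hiK),
      mul_one]
  · obtain ⟨i, hiK, hiU⟩ := not_subset.1 hKU
    rw [if_neg hKU, prod_eq_zero (mem_sdiff.2 ⟨mem_univ i, hiU⟩) (by rw [if_pos hiK]), mul_zero]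

end Combinatorics

section

variable {n : ℕ}

lemma integral_Icc_id : ∫ t in Set.Icc (0 : ℝ) 1, t = 1 / 2 := by
  rw [integral_Icc_eq_integral_Ioc, ← intervalIntegral.integral_of_le zero_le_one, integral_id]
  norm_num

lemma integral_Icc_one_sub : ∫ t in Set.Icc (0 : ℝ) 1, (1 - t) = 1 / 2 := by
  rw [integral_Icc_eq_integral_Ioc, ← intervalIntegral.integral_of_le zero_le_one,
    intervalIntegral.integral_comp_sub_left (fun t => t), integral_id]
  norm_num

lemma integral_Icc_sub_half_sq : ∫ t in Set.Icc (0 : ℝ) 1, (t - 1 / 2) ^ 2 = 1 / 12 := by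
  rw [integral_Icc_eq_integral_Ioc, ← intervalIntegral.integral_of_le zero_le_one,
    intervalIntegral.integral_comp_sub_right (fun t => t ^ 2), integral_pow]
  norm_num

lemma integral_unifCube_prod (g : Fin n → ℝ → ℝ) :
    ∫ y, ∏ i, g i (y i) ∂unifCube n = ∏ i, ∫ t in Set.Icc 0 1, g i t :=
  integral_fintype_prod_eq_prod g

lemma integrable_unifCube_prod {g : Fin n → ℝ → ℝ}
    (hg : ∀ i, IntegrableOn (g i) (Set.Icc 0 1)) :
    Integrable (fun y => ∏ i, g i (y i)) (unifCube n) :=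
  Integrable.fintype_prod hg

lemma prod_apply_ite_mem (g : Fin n → ℝ → ℝ) (T : Finset (Fin n)) (z y : Fin n → ℝ) :
    ∏ i, g i (if i ∈ T then z i else y i) =
      ∏ i, (if i ∈ T then fun _ => g i (z i) else g i) (y i) := by
  simp only [apply_ite, ite_apply]

lemma integral_unifCube_prod_ite_mem (g : Fin n → ℝ → ℝ) (T : Finset (Fin n)) (z : Fin n → ℝ) :
    ∫ y, ∏ i, g i (if i ∈ T then z i else y i) ∂unifCube n =
      ∏ i, if i ∈ T then g i (z i) else ∫ t in Set.Icc 0 1, g i t := by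
  simp_rw [prod_apply_ite_mem, integral_unifCube_prod,
    apply_ite (fun f : ℝ → ℝ => ∫ t in Set.Icc (0 : ℝ) 1, f t)]
  simp

lemma integrable_unifCube_prod_ite_mem {g : Fin n → ℝ → ℝ}
    (hg : ∀ i, IntegrableOn (g i) (Set.Icc 0 1)) (T : Finset (Fin n)) (z : Fin n → ℝ) :
    Integrable (fun y => ∏ i, g i (if i ∈ T then z i else y i)) (unifCube n) := by
  simp_rw [prod_apply_ite_mem]
  refine integrable_unifCube_prod fun i => ?_
  split_ifs
  · simp
  · exact hg i

lemma integral_unifCube_prod_mem (h : ℝ → ℝ) (S : Finset (Fin n)) :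
    ∫ z, ∏ i ∈ S, h (z i) ∂unifCube n = (∫ t in Set.Icc 0 1, h t) ^ #S := by
  have hprod : ∀ z : Fin n → ℝ, ∏ i ∈ S, h (z i) = ∏ i, (if i ∈ S then h else 1) (z i) := by
    intro z
    simp only [ite_apply, Pi.one_apply, prod_ite_mem, univ_inter]
  rw [integral_congr_ae (Filter.Eventually.of_forall hprod), integral_unifCube_prod]
  simp [apply_ite (fun f : ℝ → ℝ => ∫ t in Set.Icc (0 : ℝ) 1, f t)]

theorem anova_prod (g : Fin n → ℝ → ℝ) (S : Finset (Fin n)) (z : Fin n → ℝ) :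
    anova (fun x => ∏ i, g i (x i)) S z =
      (∏ i ∈ S, (g i (z i) - ∫ t in Set.Icc 0 1, g i t)) *
        ∏ i ∈ Sᶜ, ∫ t in Set.Icc 0 1, g i t := by
  simp_rw [anova, integral_unifCube_prod_ite_mem, sub_eq_add_neg, prod_add, sum_mul]
  refine sum_congr rfl fun T hT => ?_
  have hTS : T ⊆ S := mem_powerset.1 hT
  have hcompl : univ \ T = (S \ T) ∪ Sᶜ := by
    ext i
    have := @hTS i
    simp only [mem_sdiff, mem_univ, true_and, mem_union, mem_compl]
    tauto
  rw [prod_ite, filter_mem_eq_inter, univ_inter, filter_notMem_eq_sdiff, hcompl,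
    prod_union (disjoint_compl_right.mono_left sdiff_subset), prod_neg]
  ring

theorem anova_sum {ι : Type*} (s : Finset ι) (a : ι → ℝ) (F : ι → (Fin n → ℝ) → ℝ)
    (S : Finset (Fin n)) (z : Fin n → ℝ)
    (hF : ∀ k ∈ s, ∀ T : Finset (Fin n),
      Integrable (fun y => F k fun i => if i ∈ T then z i else y i) (unifCube n)) :
    anova (fun x => ∑ k ∈ s, a k * F k x) S z = ∑ k ∈ s, a k * anova (F k) S z := by
  simp_rw [anova, mul_sum]
  rw [sum_comm]
  refine sum_congr rfl fun T _ => ?_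
  rw [integral_finsetSum s fun k hk => (hF k hk T).const_mul (a k), mul_sum]
  refine sum_congr rfl fun k _ => ?_
  rw [integral_const_mul]
  ring

theorem fOw_mobius_eq_sum (μ : Finset (Fin n) → ℝ) (x : Fin n → ℝ) :
    fOw (mobius μ) x = ∑ K, μ K * ∏ i, (if i ∈ K then x i else 1 - x i) := by
  simp_rw [prod_ite_mem_one_sub, mul_sum, fOw, mobius, sum_mul]
  refine (sum_comm' fun U K => by simp).trans <|
    sum_congr rfl fun K _ => sum_congr rfl fun U _ => ?_
  ring

lemma banzhaf_eq_neg_two_pow_mul_fourierT (ξ : Finset (Fin n) → ℝ) (S : Finset (Fin n)) :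
    banzhaf ξ S = (-2) ^ #S * fourierT ξ S := by
  have hscale : (1 / 2 : ℝ) ^ (n - #S) = 2 ^ #S * (1 / 2 ^ n) := by
    have hS : #S ≤ n := by simpa using card_le_univ S
    rw [pow_sub₀ _ (by norm_num) hS]
    simp only [one_div, inv_pow, inv_inv]
    ring
  have hsign : ∀ K, (-1 : ℝ) ^ #(S \ K) = (-1) ^ #S * (-1) ^ #(S ∩ K) := by
    intro K
    rw [← card_sdiff_add_card_inter S K, pow_add, mul_assoc, ← pow_add, ← two_mul, pow_mul,
      neg_one_sq, one_pow, mul_one]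
  simp_rw [banzhaf, fourierT, hscale, hsign, mul_sum]
  refine sum_congr rfl fun K _ => ?_
  rw [neg_pow (2 : ℝ)]
  ring

theorem anova_fOw_mobius (μ : Finset (Fin n) → ℝ) (S : Finset (Fin n)) (z : Fin n → ℝ) :
    anova (fOw (mobius μ)) S z = banzhaf μ S * ∏ i ∈ S, (z i - 1 / 2) := by
  set g : Finset (Fin n) → Fin n → ℝ → ℝ := fun K i t => if i ∈ K then t else 1 - t
  have hg_int : ∀ K i, IntegrableOn (g K i) (Set.Icc 0 1) := fun K i => by
    dsimp only [g]
    split_ifs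
    exacts [continuous_id.integrableOn_Icc, (continuous_const.sub continuous_id).integrableOn_Icc]
  have hg_mean : ∀ K i, ∫ t in Set.Icc 0 1, g K i t = 1 / 2 := fun K i => by
    dsimp only [g]
    split_ifs
    exacts [integral_Icc_id, integral_Icc_one_sub]
  have hg_sign : ∀ K,
      ∏ i ∈ S, (g K i (z i) - 1 / 2) = (-1) ^ #(S \ K) * ∏ i ∈ S, (z i - 1 / 2) := by
    intro K
    rw [← prod_ite_mem_one_neg_one, ← prod_mul_distrib]
    refine prod_congr rfl fun i _ => ?_
    dsimp only [g]
    split_ifs <;> ring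
  have hOw : fOw (mobius μ) = fun x => ∑ K, μ K * ∏ i, g K i (x i) :=
    funext (fOw_mobius_eq_sum μ)
  rw [hOw, anova_sum univ μ (fun K x => ∏ i, g K i (x i)) S z
    fun K _ T => integrable_unifCube_prod_ite_mem (hg_int K) T z]
  simp_rw [anova_prod, hg_mean, hg_sign, prod_const, card_compl, Fintype.card_fin]
  rw [banzhaf, mul_sum, sum_mul]
  exact sum_congr rfl fun K _ => by ring

end

theorem sobol_fOw_general (n : ℕ) (μ : Finset (Fin n) → ℝ)
    (S : Finset (Fin n)) :
    (∫ z, (anova (fOw (mobius μ)) S z) ^ 2 ∂unifCube n) =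
      (1 / 3 ^ S.card : ℝ) * (fourierT μ S) ^ 2 := by
  simp_rw [anova_fOw_mobius, mul_pow, ← prod_pow]
  rw [integral_const_mul, integral_unifCube_prod_mem (fun t => (t - 1 / 2) ^ 2),
    integral_Icc_sub_half_sq, banzhaf_eq_neg_two_pow_mul_fourierT]
  rw [mul_pow, mul_right_comm, ← pow_mul, mul_comm #S 2, pow_mul, ← mul_pow]
  norm_num [div_pow]

/-- Theorem 1 (Sobol' index formula): the nonnormalized Sobol' index of a
nonempty `S` for the multilinear extension of a capacity is `(1/3^{|S|}) μ̂(S)²`. -/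
theorem sobol_fOw (n : ℕ) (μ : Finset (Fin n) → ℝ) (hμ : Capacity μ)
    (S : Finset (Fin n)) (hS : S.Nonempty) :
    (∫ z, (anova (fOw (mobius μ)) S z) ^ 2 ∂unifCube n) =
      (1 / 3 ^ S.card : ℝ) * (fourierT μ S) ^ 2 :=
  sobol_fOw_general n μ S
end

section
/- (Theorem 1, ANOVA decomposition) Let f^Ow be the multilinear extension of a capacity μ on N. Then for every x ∈ [0,1]^n, f^Ow(x) = Σ_{S ⊆ N} (−1)^{|S|} Π_{i∈S} (2 x_i − 1) · μ̂(S), where μ̂ is the Fourier transform of μ. -/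
open MeasureTheory Finset

lemma sum_all_subsets_prod {n : ℕ} (g : Fin n → ℝ) :
    ∑ S : Finset (Fin n), ∏ i ∈ S, g i = ∏ i, (g i + 1) := by
  rw [Finset.prod_add, ← Finset.powerset_univ]
  exact Finset.sum_congr rfl fun t _ => by simp

lemma prod_neg_one_pow {α : Type*} [DecidableEq α] (s : Finset α) (y : α → ℝ) :
    ∏ i ∈ s, (-y i) = (-1 : ℝ) ^ s.card * ∏ i ∈ s, y i := by
  rw [← Finset.prod_const, ← Finset.prod_mul_distrib]
  exact Finset.prod_congr rfl fun i _ => by ring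

lemma sum_supsets {n : ℕ} (y : Fin n → ℝ) (U : Finset (Fin n)) :
    ∑ T ∈ Finset.univ.filter (fun T => U ⊆ T),
        (-1 : ℝ) ^ (T \ U).card * ∏ i ∈ T, y i
      = (∏ i ∈ U, y i) * ∏ i ∈ Uᶜ, (1 - y i) := by
  have h2 : ∏ i ∈ Uᶜ, (1 - y i)
      = ∑ W ∈ Uᶜ.powerset, (-1 : ℝ) ^ W.card * ∏ i ∈ W, y i := by
    have h := Finset.prod_add (fun i => -y i) (fun _ => (1 : ℝ)) Uᶜ
    simp only [Finset.prod_const_one, mul_one] at h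
    calc ∏ i ∈ Uᶜ, (1 - y i) = ∏ i ∈ Uᶜ, (-y i + 1) :=
          Finset.prod_congr rfl fun i _ => by ring
      _ = ∑ W ∈ Uᶜ.powerset, ∏ i ∈ W, (-y i) := h
      _ = ∑ W ∈ Uᶜ.powerset, (-1 : ℝ) ^ W.card * ∏ i ∈ W, y i :=
          Finset.sum_congr rfl fun W _ => prod_neg_one_pow W y
  rw [h2, Finset.mul_sum]
  refine Finset.sum_nbij' (fun T => T \ U) (fun W => U ∪ W) ?_ ?_ ?_ ?_ ?_
  · intro T hT
    simp only [Finset.mem_powerset]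
    intro a ha
    simp only [Finset.mem_sdiff] at ha
    simp [ha.2]
  · intro W hW
    simp only [Finset.mem_filter, Finset.mem_univ, true_and]
    exact Finset.subset_union_left
  · intro T hT
    simp only [Finset.mem_filter, Finset.mem_univ, true_and] at hT
    exact Finset.union_sdiff_of_subset hT
  · intro W hW
    simp only [Finset.mem_powerset] at hW
    refine Finset.union_sdiff_cancel_left ?_
    exact Finset.disjoint_left.2 fun a haU haW => by
      have := hW haW; simp [haU] at this
  · intro T hT
    simp only [Finset.mem_filter, Finset.mem_univ, true_and] at hT
    have hd : Disjoint U (T \ U) := Finset.disjoint_sdiff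
    have hp : ∏ i ∈ T, y i = (∏ i ∈ U, y i) * ∏ i ∈ T \ U, y i := by
      rw [← Finset.prod_union hd, Finset.union_sdiff_of_subset hT]
    rw [hp]
    ring

lemma pivot_eq {n : ℕ} (μ : Finset (Fin n) → ℝ) (x : Fin n → ℝ) :
    fOw (mobius μ) x
      = ∑ K : Finset (Fin n), μ K * ((∏ i ∈ K, x i) * ∏ i ∈ Kᶜ, (1 - x i)) := by
  unfold fOw mobius
  have h1 : ∀ T : Finset (Fin n),
      (∑ U ∈ T.powerset, (-1 : ℝ) ^ (T \ U).card * μ U) * ∏ i ∈ T, x i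
        = ∑ U ∈ T.powerset, (-1 : ℝ) ^ (T \ U).card * μ U * ∏ i ∈ T, x i :=
    fun T => Finset.sum_mul _ _ _
  rw [Finset.sum_congr rfl fun T _ => h1 T]
  rw [Finset.sum_comm' (t' := Finset.univ)
    (s' := fun U => Finset.univ.filter fun T => U ⊆ T)
    (by intro T U; simp [Finset.mem_powerset])]
  refine Finset.sum_congr rfl fun U _ => ?_
  rw [← sum_supsets x U, Finset.mul_sum]
  exact Finset.sum_congr rfl fun T _ => by ring

/-- Theorem 1 (ANOVA decomposition): `f^Ow(x) = ∑_{S ⊆ N} (-1)^{|S|} ∏_{i ∈ S} (2 x_i - 1) μ̂(S)`. -/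
theorem anova_decomposition_fOw (n : ℕ) (μ : Finset (Fin n) → ℝ) (hμ : Capacity μ)
    (x : Fin n → ℝ) (hx : ∀ i, x i ∈ Set.Icc (0 : ℝ) 1) :
    fOw (mobius μ) x =
      ∑ S : Finset (Fin n), (-1 : ℝ) ^ S.card * (∏ i ∈ S, (2 * x i - 1)) * fourierT μ S := by
  rw [pivot_eq]
  unfold fourierT
  have key : ∀ K : Finset (Fin n),
      ∑ S : Finset (Fin n),
          (-1 : ℝ) ^ S.card * (∏ i ∈ S, (2 * x i - 1)) * (-1 : ℝ) ^ (S ∩ K).card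
        = 2 ^ n * ((∏ i ∈ K, x i) * ∏ i ∈ Kᶜ, (1 - x i)) := by
    intro K
    have hterm : ∀ S : Finset (Fin n),
        (-1 : ℝ) ^ S.card * (∏ i ∈ S, (2 * x i - 1)) * (-1 : ℝ) ^ (S ∩ K).card
          = ∏ i ∈ S, ((1 - 2 * x i) * (if i ∈ K then (-1 : ℝ) else 1)) := by
      intro S
      rw [Finset.prod_mul_distrib]
      have e1 : ∏ i ∈ S, (1 - 2 * x i)
          = (-1 : ℝ) ^ S.card * ∏ i ∈ S, (2 * x i - 1) := by
        rw [← prod_neg_one_pow]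
        exact Finset.prod_congr rfl fun i _ => by ring
      have e2 : ∏ i ∈ S, (if i ∈ K then (-1 : ℝ) else 1)
          = (-1 : ℝ) ^ (S ∩ K).card := by
        rw [Finset.prod_ite_mem, Finset.prod_const]
      rw [e1, e2]
    rw [Finset.sum_congr rfl fun S _ => hterm S, sum_all_subsets_prod]
    have hsplit : ∀ i : Fin n,
        (1 - 2 * x i) * (if i ∈ K then (-1 : ℝ) else 1) + 1
          = if i ∈ K then 2 * x i else 2 * (1 - x i) := by
      intro i
      by_cases h : i ∈ K
      · simp only [if_pos h]; ring
      · simp only [if_neg h]; ring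
    rw [Finset.prod_congr rfl fun i _ => hsplit i]
    rw [← Finset.prod_mul_prod_compl K]
    have pK : ∏ i ∈ K, (if i ∈ K then 2 * x i else 2 * (1 - x i))
        = 2 ^ K.card * ∏ i ∈ K, x i := by
      rw [Finset.prod_congr rfl fun i hi => if_pos hi, Finset.prod_mul_distrib,
        Finset.prod_const]
    have pKc : ∏ i ∈ Kᶜ, (if i ∈ K then 2 * x i else 2 * (1 - x i))
        = 2 ^ Kᶜ.card * ∏ i ∈ Kᶜ, (1 - x i) := by
      rw [Finset.prod_congr rfl fun i hi =>
        if_neg (Finset.mem_compl.1 hi), Finset.prod_mul_distrib, Finset.prod_const]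
    rw [pK, pKc]
    have hcard : (2 : ℝ) ^ K.card * 2 ^ Kᶜ.card = 2 ^ n := by
      rw [← pow_add, Finset.card_add_card_compl]
      simp [Finset.card_univ]
    rw [← hcard]
    ring
  calc ∑ K : Finset (Fin n), μ K * ((∏ i ∈ K, x i) * ∏ i ∈ Kᶜ, (1 - x i))
      = ∑ K : Finset (Fin n), μ K * ((1 / 2 ^ n : ℝ) *
          ∑ S : Finset (Fin n),
            (-1 : ℝ) ^ S.card * (∏ i ∈ S, (2 * x i - 1)) * (-1 : ℝ) ^ (S ∩ K).card) := by
        refine Finset.sum_congr rfl fun K _ => ?_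
        rw [key K]
        have h2 : (2 : ℝ) ^ n ≠ 0 := by positivity
        field_simp
    _ = ∑ S : Finset (Fin n), (-1 : ℝ) ^ S.card * (∏ i ∈ S, (2 * x i - 1)) *
          ((1 / 2 ^ n : ℝ) * ∑ T : Finset (Fin n), (-1 : ℝ) ^ (S ∩ T).card * μ T) := by
        simp only [Finset.mul_sum]
        rw [Finset.sum_comm]
        exact Finset.sum_congr rfl fun S _ => Finset.sum_congr rfl fun K _ => by ring
end

section
/- (Variance decomposition of the multilinear extension) Let f^Ow be the multilinear extension of a capacity μ on N. Then the total variance of f^Ow with respect to the uniform measure on [0,1]^n decomposes as Var[f^Ow] = ∫_{[0,1]^n} (f^Ow(z) − μ̂(∅))^2 dz = Σ_{∅ ≠ S ⊆ N} (1/3^{|S|}) (μ̂(S))^2, where μ̂ is the Fourier transform of μ. -/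
open MeasureTheory Finset

/-!
The multilinear extension of `μ` equals `∑_T μ T ∏_{i ∈ T} z i ∏_{i ∉ T} (1 - z i)`. Writing
`2 z i = 1 - (1 - 2 z i)` and `2 (1 - z i) = 1 + (1 - 2 z i)` and expanding turns this into
`∑_S μ̂ S · walsh S z` with `walsh S z = ∏_{i ∈ S} (1 - 2 z i)`. The Walsh functions are orthogonal
for the uniform measure on the cube, with `∫ (walsh S)² = 3^{-|S|}` because
`∫₀¹ (1 - 2x)² dx = 1/3`, and `walsh ∅ = 1`; Parseval's identity gives the variance.
-/

theorem Finset.sum_superset_eq_sum_powerset_compl {α M : Type*} [Fintype α] [DecidableEq α]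
    [AddCommMonoid M] (B : Finset α) (f : Finset α → M) :
    ∑ T with B ⊆ T, f T = ∑ R ∈ Bᶜ.powerset, f (B ∪ R) := by
  refine sum_nbij' (· \ B) (B ∪ ·) ?_ ?_ ?_ ?_ ?_
  · simp [subset_iff]
  · simp
  · intro T hT
    exact union_sdiff_of_subset (mem_filter.1 hT).2
  · intro R hR
    exact union_sdiff_cancel_left (disjoint_right.2 fun _ hx => mem_compl.1 (mem_powerset.1 hR hx))
  · intro T hT
    rw [union_sdiff_of_subset (mem_filter.1 hT).2]

theorem fOw_mobius_eq_sum_mul_prod_ite {n : ℕ} (ξ : Finset (Fin n) → ℝ) (z : Fin n → ℝ) :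
    fOw (mobius ξ) z = ∑ T, ξ T * ∏ i, (if i ∈ T then z i else 1 - z i) := by
  have superset_sum (U : Finset (Fin n)) :
      ∑ T with U ⊆ T, (-1 : ℝ) ^ #(T \ U) * ∏ i ∈ T, z i
        = ∏ i, (if i ∈ U then z i else 1 - z i) := by
    rw [sum_superset_eq_sum_powerset_compl, prod_ite, filter_univ_mem,
      show ({i | i ∉ U} : Finset (Fin n)) = Uᶜ by ext; simp]
    simp_rw [sub_eq_add_neg, add_comm (1 : ℝ), prod_add_one, mul_sum]
    refine sum_congr rfl fun R hR => ?_
    have hdisj : Disjoint U R :=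
      disjoint_right.2 fun _ hx => mem_compl.1 (mem_powerset.1 hR hx)
    rw [union_sdiff_cancel_left hdisj, prod_union hdisj, prod_neg]
    ring
  simp_rw [fOw, mobius, sum_mul]
  rw [sum_comm' (t' := univ) (s' := fun U => {T | U ⊆ T}) (by simp)]
  simp_rw [← superset_sum, mul_sum]
  refine sum_congr rfl fun U _ => sum_congr rfl fun T _ => by ring

/-- On the vertex `𝟙_T` of the cube, `walsh S` takes the value `(-1) ^ #(S ∩ T)`. -/
noncomputable def walsh {n : ℕ} (S : Finset (Fin n)) (z : Fin n → ℝ) : ℝ :=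
  ∏ i ∈ S, (1 - 2 * z i)

theorem sum_neg_one_pow_card_inter_mul_walsh {n : ℕ} (T : Finset (Fin n)) (z : Fin n → ℝ) :
    ∑ S, (-1 : ℝ) ^ #(S ∩ T) * walsh S z = 2 ^ n * ∏ i, (if i ∈ T then z i else 1 - z i) := by
  have signed_walsh (S : Finset (Fin n)) : (-1 : ℝ) ^ #(S ∩ T) * walsh S z
      = ∏ i ∈ S, (if i ∈ T then -1 else 1) * (1 - 2 * z i) := by
    rw [prod_mul_distrib, prod_ite_mem, prod_const, walsh]
  have one_add_signed (i : Fin n) : 1 + (if i ∈ T then -1 else 1) * (1 - 2 * z i)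
      = 2 * (if i ∈ T then z i else 1 - z i) := by
    split_ifs <;> ring
  rw [sum_congr rfl fun S _ => signed_walsh S, ← powerset_univ, ← prod_one_add]
  simp_rw [one_add_signed, prod_mul_distrib, prod_const, card_univ, Fintype.card_fin]

theorem fOw_mobius_eq_sum_fourierT_mul_walsh {n : ℕ} (ξ : Finset (Fin n) → ℝ) (z : Fin n → ℝ) :
    fOw (mobius ξ) z = ∑ S, fourierT ξ S * walsh S z := by
  simp_rw [fOw_mobius_eq_sum_mul_prod_ite, fourierT, mul_sum, sum_mul]
  rw [sum_comm]
  refine sum_congr rfl fun T _ => ?_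
  have expand : ∑ S, 1 / 2 ^ n * ((-1 : ℝ) ^ #(S ∩ T) * ξ T) * walsh S z
      = 1 / 2 ^ n * ξ T * ∑ S, (-1 : ℝ) ^ #(S ∩ T) * walsh S z := by
    rw [mul_sum]
    exact sum_congr rfl fun _ _ => by ring
  rw [expand, sum_neg_one_pow_card_inter_mul_walsh]
  field_simp

theorem integral_Icc_zero_one_one_sub_two_mul_pow (k : ℕ) :
    ∫ x in Set.Icc (0 : ℝ) 1, (1 - 2 * x) ^ k = (1 - (-1) ^ (k + 1)) / (2 * (k + 1)) := by
  rw [integral_Icc_eq_integral_Ioc, ← intervalIntegral.integral_of_le zero_le_one,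
    intervalIntegral.integral_comp_sub_mul (fun x => x ^ k) two_ne_zero, integral_pow]
  simp only [smul_eq_mul, mul_zero, mul_one, sub_zero, one_pow]
  rw [mul_comm (2 : ℝ), ← div_div]
  ring

theorem integral_Icc_zero_one_ite_mul_ite (p q : Prop) [Decidable p] [Decidable q] :
    ∫ x in Set.Icc (0 : ℝ) 1, (if p then 1 - 2 * x else 1) * (if q then 1 - 2 * x else 1)
      = if p ↔ q then (if p then 1 / 3 else 1) else 0 := by
  have h := integral_Icc_zero_one_one_sub_two_mul_pow
  by_cases hp : p <;> by_cases hq : q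
  · simp only [hp, hq, if_true, iff_self, ← sq, h 2]
    norm_num
  · simpa [hp, hq] using h 1
  · simpa [hp, hq] using h 1
  · simp [hp, hq]

theorem walsh_mul_walsh {n : ℕ} (S S' : Finset (Fin n)) (z : Fin n → ℝ) :
    walsh S z * walsh S' z
      = ∏ i, (if i ∈ S then 1 - 2 * z i else 1) * (if i ∈ S' then 1 - 2 * z i else 1) := by
  rw [prod_mul_distrib, Fintype.prod_ite_mem, Fintype.prod_ite_mem, walsh, walsh]

theorem integrable_walsh_mul_walsh {n : ℕ} (S S' : Finset (Fin n)) :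
    Integrable (fun z => walsh S z * walsh S' z) (unifCube n) := by
  simp_rw [walsh_mul_walsh]
  refine Integrable.fintype_prod
    (f := fun i x => (if i ∈ S then 1 - 2 * x else 1) * (if i ∈ S' then 1 - 2 * x else 1))
    fun i => Continuous.integrableOn_Icc ?_
  split_ifs <;> fun_prop

theorem integral_walsh_mul_walsh {n : ℕ} (S S' : Finset (Fin n)) :
    ∫ z, walsh S z * walsh S' z ∂unifCube n = if S = S' then (1 / 3) ^ #S else 0 := by
  simp_rw [walsh_mul_walsh]
  rw [unifCube, integral_fintype_prod_eq_prod
    (fun i x => (if i ∈ S then 1 - 2 * x else 1) * (if i ∈ S' then 1 - 2 * x else 1))]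
  simp_rw [integral_Icc_zero_one_ite_mul_ite]
  split_ifs with h
  · subst h
    simp
  · obtain ⟨i, hi⟩ : ∃ i, ¬(i ∈ S ↔ i ∈ S') := by
      by_contra! hc
      exact h (ext hc)
    exact prod_eq_zero (mem_univ i) (if_neg hi)

theorem integral_sum_mul_walsh_sq {n : ℕ} (F : Finset (Finset (Fin n)))
    (a : Finset (Fin n) → ℝ) :
    ∫ z, (∑ S ∈ F, a S * walsh S z) ^ 2 ∂unifCube n = ∑ S ∈ F, (1 / 3) ^ #S * a S ^ 2 := by
  have integrable (S S' : Finset (Fin n)) :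
      Integrable (fun z => a S * a S' * (walsh S z * walsh S' z)) (unifCube n) :=
    (integrable_walsh_mul_walsh S S').const_mul _
  simp_rw [sq, sum_mul_sum, mul_mul_mul_comm]
  rw [integral_finsetSum _ fun S _ => integrable_finsetSum _ fun S' _ => integrable S S']
  refine sum_congr rfl fun S hS => ?_
  rw [integral_finsetSum _ fun S' _ => integrable S S']
  simp_rw [integral_const_mul, integral_walsh_mul_walsh, mul_ite, mul_zero, sum_ite_eq, if_pos hS]
  ring

theorem variance_decomposition_fOw_general (n : ℕ) (μ : Finset (Fin n) → ℝ) :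
    (∫ z, (fOw (mobius μ) z - fourierT μ ∅) ^ 2 ∂unifCube n) =
      ∑ S ∈ Finset.univ.filter (fun S : Finset (Fin n) => S ≠ ∅),
        (1 / 3 ^ S.card : ℝ) * (fourierT μ S) ^ 2 := by
  have centered (z : Fin n → ℝ) : fOw (mobius μ) z - fourierT μ ∅
      = ∑ S ∈ univ.filter (fun S : Finset (Fin n) => S ≠ ∅), fourierT μ S * walsh S z := by
    rw [fOw_mobius_eq_sum_fourierT_mul_walsh, filter_ne', ← add_sum_erase _ _ (mem_univ ∅),
      walsh, prod_empty, mul_one, add_sub_cancel_left]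
  simp_rw [centered, integral_sum_mul_walsh_sq, one_div_pow]

/-- Variance decomposition of the multilinear extension:
`Var[f^Ow] = ∑_{∅ ≠ S ⊆ N} (1/3^{|S|}) μ̂(S)²`. -/
theorem variance_decomposition_fOw (n : ℕ) (μ : Finset (Fin n) → ℝ) (hμ : Capacity μ) :
    (∫ z, (fOw (mobius μ) z - fourierT μ ∅) ^ 2 ∂unifCube n) =
      ∑ S ∈ Finset.univ.filter (fun S : Finset (Fin n) => S ≠ ∅),
        (1 / 3 ^ S.card : ℝ) * (fourierT μ S) ^ 2 :=
  variance_decomposition_fOw_general n μ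
end

section
/- (Theorem 2, singleton ANOVA component) Let μ be a 2-additive capacity on N with Möbius transform m, and let f^Lo(z) = Σ_{i∈N} m(i) z_i + Σ_{{i,j} ⊆ N} m(i,j) min(z_i, z_j). For k ∈ N, the ANOVA component of f^Lo for the singleton {k} is f^Lo_k(z_k) = −(m(k,·)/2) z_k² + (m(k) + m(k,·)) z_k − (m(k)/2 + m(k,·)/3) for all z_k ∈ [0,1], where m(k,·) = Σ_{i ∈ N \ {k}} m(k,i). -/
open MeasureTheory Finset

noncomputable abbrev uI : Measure ℝ := volume.restrict (Set.Icc 0 1)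

instance : IsProbabilityMeasure (volume.restrict (Set.Icc (0:ℝ) 1)) := by
  constructor
  rw [Measure.restrict_apply_univ, Real.volume_Icc]
  norm_num

instance (n : ℕ) : IsProbabilityMeasure (unifCube n) := by
  unfold unifCube; infer_instance

lemma map_eval (n : ℕ) (i : Fin n) :
    Measure.map (fun x : Fin n → ℝ => x i) (unifCube n) = uI := by
  ext s hs
  rw [Measure.map_apply (measurable_pi_apply i) hs]
  have h1 : (fun x : Fin n → ℝ => x i) ⁻¹' s
      = Set.pi Set.univ (Function.update (fun _ => Set.univ) i s) := by
    rw [← Set.eval_preimage]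
  rw [h1, unifCube, Measure.pi_pi, Finset.prod_eq_single i]
  · rw [Function.update_self]
  · intro l _ hl
    rw [Function.update_of_ne hl]
    exact measure_univ
  · simp

lemma map_pair (n : ℕ) (i j : Fin n) (hij : i ≠ j) :
    Measure.map (fun x : Fin n → ℝ => (x i, x j)) (unifCube n) = uI.prod uI := by
  have hm : Measurable (fun x : Fin n → ℝ => (x i, x j)) :=
    (measurable_pi_apply i).prodMk (measurable_pi_apply j)
  symm
  refine Measure.prod_eq fun s t hs ht => ?_
  rw [Measure.map_apply hm (hs.prod ht)]
  have h1 : (fun x : Fin n → ℝ => (x i, x j)) ⁻¹' (s ×ˢ t)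
      = Set.pi Set.univ (fun l => if l = i then s else if l = j then t else Set.univ) := by
    ext x
    simp only [Set.mem_preimage, Set.mem_prod, Set.mem_pi, Set.mem_univ, true_implies]
    constructor
    · rintro ⟨h1, h2⟩ l
      by_cases hli : l = i
      · subst hli; simp [h1]
      by_cases hlj : l = j
      · subst hlj; simp [if_neg hli, h2]
      · simp [hli, hlj]
    · intro h
      have h1 := h i
      have h2 := h j
      simp only [if_pos rfl] at h1
      rw [if_neg (Ne.symm hij), if_pos rfl] at h2
      exact ⟨h1, h2⟩
  rw [h1, unifCube, Measure.pi_pi]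
  rw [← Finset.prod_subset (Finset.subset_univ ({i, j} : Finset (Fin n)))
    (by intro l _ hl
        simp only [Finset.mem_insert, Finset.mem_singleton, not_or] at hl
        rw [if_neg hl.1, if_neg hl.2]
        exact measure_univ)]
  rw [Finset.prod_pair hij]
  rw [if_pos rfl, if_neg (Ne.symm hij), if_pos rfl]

/- scalar integrals -/

lemma Icc_to_ii (f : ℝ → ℝ) : ∫ a, f a ∂uI = ∫ a in (0:ℝ)..1, f a := by
  rw [MeasureTheory.integral_Icc_eq_integral_Ioc, intervalIntegral.integral_of_le (by norm_num)]

lemma int_id : ∫ a, a ∂uI = 1/2 := by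
  rw [Icc_to_ii]; simp

lemma int_min_const {z : ℝ} (hz : z ∈ Set.Icc (0:ℝ) 1) :
    ∫ a, min z a ∂uI = z - z^2/2 := by
  obtain ⟨h0, h1⟩ := hz
  rw [Icc_to_ii, ← intervalIntegral.integral_add_adjacent_intervals
    (a := 0) (b := z) (c := 1)
    ((continuous_const.min continuous_id').intervalIntegrable _ _)
    ((continuous_const.min continuous_id').intervalIntegrable _ _)]
  have e1 : ∫ a in (0:ℝ)..z, min z a = ∫ a in (0:ℝ)..z, a := by
    refine intervalIntegral.integral_congr fun a ha => ?_
    rw [Set.uIcc_of_le h0] at ha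
    exact min_eq_right ha.2
  have e2 : ∫ a in z..(1:ℝ), min z a = ∫ a in z..(1:ℝ), z := by
    refine intervalIntegral.integral_congr fun a ha => ?_
    rw [Set.uIcc_of_le h1] at ha
    exact min_eq_left ha.1
  rw [e1, e2]
  simp
  ring

lemma int_min_min : ∫ p : ℝ × ℝ, min p.1 p.2 ∂(uI.prod uI) = 1/3 := by
  have hint : Integrable (fun p : ℝ × ℝ => min p.1 p.2) (uI.prod uI) := by
    rw [Measure.prod_restrict]
    exact (continuous_fst.min continuous_snd).continuousOn.integrableOn_compact
      ((isCompact_Icc).prod (isCompact_Icc))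
  rw [MeasureTheory.integral_prod _ hint]
  have e1 : ∫ a, (∫ b, min a b ∂uI) ∂uI = ∫ a, (a - a^2/2) ∂uI := by
    refine MeasureTheory.setIntegral_congr_fun measurableSet_Icc fun a ha => ?_
    exact int_min_const ha
  rw [e1, Icc_to_ii]
  simp
  norm_num

/- transfer lemmas -/

lemma measurePreserving_eval (n : ℕ) (i : Fin n) :
    MeasurePreserving (fun x : Fin n → ℝ => x i) (unifCube n) uI :=
  ⟨measurable_pi_apply i, map_eval n i⟩

lemma measurePreserving_pair (n : ℕ) {i j : Fin n} (hij : i ≠ j) :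
    MeasurePreserving (fun x : Fin n → ℝ => (x i, x j)) (unifCube n) (uI.prod uI) :=
  ⟨(measurable_pi_apply i).prodMk (measurable_pi_apply j), map_pair n i j hij⟩

lemma integral_eval (n : ℕ) (i : Fin n) (g : ℝ → ℝ) (hg : AEStronglyMeasurable g uI) :
    ∫ x, g (x i) ∂unifCube n = ∫ a, g a ∂uI := by
  rw [← map_eval n i, integral_map (measurable_pi_apply i).aemeasurable
    (by rwa [map_eval])]

lemma integral_pairC (n : ℕ) {i j : Fin n} (hij : i ≠ j) (g : ℝ × ℝ → ℝ)
    (hg : AEStronglyMeasurable g (uI.prod uI)) :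
    ∫ x, g (x i, x j) ∂unifCube n = ∫ p, g p ∂(uI.prod uI) := by
  rw [← map_pair n i j hij, integral_map
    ((measurable_pi_apply i).prodMk (measurable_pi_apply j)).aemeasurable
    (by rwa [map_pair n i j hij])]

lemma integrable_eval (n : ℕ) (i : Fin n) (g : ℝ → ℝ) (hg : Integrable g uI) :
    Integrable (fun x : Fin n → ℝ => g (x i)) (unifCube n) :=
  ((measurePreserving_eval n i).integrable_comp hg.1).mpr hg

lemma integrable_pair (n : ℕ) {i j : Fin n} (hij : i ≠ j) (g : ℝ × ℝ → ℝ)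
    (hg : Integrable g (uI.prod uI)) :
    Integrable (fun x : Fin n → ℝ => g (x i, x j)) (unifCube n) :=
  ((measurePreserving_pair n hij).integrable_comp hg.1).mpr hg

/- concrete coordinate integrals -/

lemma integrable_coord (n : ℕ) (i : Fin n) :
    Integrable (fun x : Fin n → ℝ => x i) (unifCube n) :=
  integrable_eval n i (fun a => a) (continuous_id'.integrableOn_Icc)

lemma int_coord (n : ℕ) (i : Fin n) : ∫ x, x i ∂unifCube n = 1/2 :=
  (integral_eval n i (fun a => a) continuous_id'.aestronglyMeasurable).trans int_id

lemma integrable_min_const (n : ℕ) (c : ℝ) (j : Fin n) :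
    Integrable (fun x : Fin n → ℝ => min c (x j)) (unifCube n) :=
  integrable_eval n j (fun a => min c a)
    ((continuous_const.min continuous_id').integrableOn_Icc)

lemma int_min_const_coord (n : ℕ) {c : ℝ} (hc : c ∈ Set.Icc (0:ℝ) 1) (j : Fin n) :
    ∫ x, min c (x j) ∂unifCube n = c - c^2/2 :=
  (integral_eval n j (fun a => min c a)
    (continuous_const.min continuous_id').aestronglyMeasurable).trans (int_min_const hc)

lemma integrable_min_pair (n : ℕ) {i j : Fin n} (hij : i ≠ j) :
    Integrable (fun x : Fin n → ℝ => min (x i) (x j)) (unifCube n) := by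
  refine integrable_pair n hij (fun p => min p.1 p.2) ?_
  rw [Measure.prod_restrict]
  exact (continuous_fst.min continuous_snd).continuousOn.integrableOn_compact
    ((isCompact_Icc).prod (isCompact_Icc))

lemma int_min_pair (n : ℕ) {i j : Fin n} (hij : i ≠ j) :
    ∫ x, min (x i) (x j) ∂unifCube n = 1/3 :=
  (integral_pairC n hij (fun p => min p.1 p.2)
    (continuous_fst.min continuous_snd).aestronglyMeasurable).trans int_min_min

/-- Theorem 2 (singleton ANOVA component) for the Choquet integral of a
2-additive capacity. -/
theorem anova_fLo_singleton (n : ℕ) (μ : Finset (Fin n) → ℝ) (hμ : Capacity μ)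
    (h2 : ∀ T : Finset (Fin n), 2 < T.card → mobius μ T = 0)
    (k : Fin n) (z : Fin n → ℝ) (hz : z k ∈ Set.Icc (0 : ℝ) 1) :
    anova (fLo (mobius μ)) {k} z =
      -((∑ i ∈ Finset.univ \ {k}, mobius μ {k, i}) / 2) * (z k) ^ 2 +
        (mobius μ {k} + ∑ i ∈ Finset.univ \ {k}, mobius μ {k, i}) * z k -
        (mobius μ {k} / 2 + (∑ i ∈ Finset.univ \ {k}, mobius μ {k, i}) / 3) := by
    classical
  set m : Finset (Fin n) → ℝ := mobius μ with hm
  -- expand anova over powerset of {k}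
  have hw0 : ∀ y : Fin n → ℝ,
      (fun i => if i ∈ (∅ : Finset (Fin n)) then z i else y i) = y := by
    intro y; funext i; simp
  have hw1 : ∀ y : Fin n → ℝ,
      (fun i => if i ∈ ({k} : Finset (Fin n)) then z i else y i)
        = fun i => if i = k then z k else y i := by
    intro y; funext i
    by_cases h : i = k
    · subst h; simp
    · simp [h]
  have hps : ({k} : Finset (Fin n)).powerset = {∅, {k}} := by
    ext t; simp [Finset.subset_singleton_iff]
  rw [anova, hps, Finset.sum_insert (by simp [Ne.symm (Finset.singleton_ne_empty k)]),
    Finset.sum_singleton]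
  simp only [hw0, hw1, Finset.sdiff_empty, Finset.card_singleton, pow_one,
    Finset.sdiff_self, Finset.card_empty, pow_zero, one_mul, Finset.bot_eq_empty]
  -- integrability and values of the pieces
  have lin : ∀ i : Fin n,
      Integrable (fun y : Fin n → ℝ => m {i} * (if i = k then z k else y i)) (unifCube n)
      ∧ (∫ y, m {i} * (if i = k then z k else y i) ∂unifCube n)
          = m {i} * (if i = k then z k else 1/2) := by
    intro i
    by_cases h : i = k
    · simp only [if_pos h]
      exact ⟨integrable_const _, by simp⟩
    · simp only [if_neg h]
      exact ⟨(integrable_coord n i).const_mul _,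
        by rw [MeasureTheory.integral_const_mul, int_coord]⟩
  have pairlem : ∀ i j : Fin n, i < j →
      Integrable (fun y : Fin n → ℝ =>
        m {i, j} * min (if i = k then z k else y i) (if j = k then z k else y j)) (unifCube n)
      ∧ (∫ y, m {i, j} * min (if i = k then z k else y i) (if j = k then z k else y j)
            ∂unifCube n)
          = m {i, j} * (if i = k ∨ j = k then z k - (z k)^2/2 else 1/3) := by
    intro i j hlt
    have hij : i ≠ j := ne_of_lt hlt
    by_cases hi : i = k
    · have hj : ¬ j = k := fun h => hij (hi.trans h.symm)
      simp only [if_pos hi, if_neg hj, if_pos (Or.inl hi)]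
      exact ⟨(integrable_min_const n (z k) j).const_mul _,
        by rw [MeasureTheory.integral_const_mul, int_min_const_coord n hz]⟩
    · by_cases hj : j = k
      · simp only [if_neg hi, if_pos hj, if_pos (Or.inr hj)]
        have hc : ∀ y : Fin n → ℝ, min (y i) (z k) = min (z k) (y i) := fun y => min_comm _ _
        simp only [hc]
        exact ⟨(integrable_min_const n (z k) i).const_mul _,
          by rw [MeasureTheory.integral_const_mul, int_min_const_coord n hz]⟩
      · simp only [if_neg hi, if_neg hj, if_neg (by tauto : ¬ (i = k ∨ j = k))]
        exact ⟨(integrable_min_pair n hij).const_mul _,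
          by rw [MeasureTheory.integral_const_mul, int_min_pair n hij]⟩
  -- value of the unperturbed integral
  have hB : (∫ y, fLo m y ∂unifCube n)
      = (∑ i, m {i} * (1/2))
        + ∑ i, ∑ j ∈ Finset.univ.filter (fun j => i < j), m {i, j} * (1/3) := by
    simp only [fLo]
    rw [MeasureTheory.integral_add
      (MeasureTheory.integrable_finset_sum _ fun i _ => (integrable_coord n i).const_mul _)
      (MeasureTheory.integrable_finset_sum _ fun i _ =>
        MeasureTheory.integrable_finset_sum _ fun j hj =>
          (integrable_min_pair n (ne_of_lt (Finset.mem_filter.mp hj).2)).const_mul _),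
      MeasureTheory.integral_finset_sum _
        (fun i _ => (integrable_coord n i).const_mul _),
      MeasureTheory.integral_finset_sum _ (fun i _ =>
        MeasureTheory.integrable_finset_sum _ fun j hj =>
          (integrable_min_pair n (ne_of_lt (Finset.mem_filter.mp hj).2)).const_mul _)]
    congr 1
    · exact Finset.sum_congr rfl fun i _ => by
        rw [MeasureTheory.integral_const_mul, int_coord]
    · refine Finset.sum_congr rfl fun i _ => ?_
      rw [MeasureTheory.integral_finset_sum _ (fun j hj =>
        (integrable_min_pair n (ne_of_lt (Finset.mem_filter.mp hj).2)).const_mul _)]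
      exact Finset.sum_congr rfl fun j hj => by
        rw [MeasureTheory.integral_const_mul,
          int_min_pair n (ne_of_lt (Finset.mem_filter.mp hj).2)]
  -- value of the perturbed integral
  have hA : (∫ y, fLo m (fun i => if i = k then z k else y i) ∂unifCube n)
      = (∑ i, m {i} * (if i = k then z k else 1/2))
        + ∑ i, ∑ j ∈ Finset.univ.filter (fun j => i < j),
            m {i, j} * (if i = k ∨ j = k then z k - (z k)^2/2 else 1/3) := by
    simp only [fLo]
    rw [MeasureTheory.integral_add
      (MeasureTheory.integrable_finset_sum _ fun i _ => (lin i).1)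
      (MeasureTheory.integrable_finset_sum _ fun i _ =>
        MeasureTheory.integrable_finset_sum _ fun j hj =>
          (pairlem i j (Finset.mem_filter.mp hj).2).1),
      MeasureTheory.integral_finset_sum _ (fun i _ => (lin i).1),
      MeasureTheory.integral_finset_sum _ (fun i _ =>
        MeasureTheory.integrable_finset_sum _ fun j hj =>
          (pairlem i j (Finset.mem_filter.mp hj).2).1)]
    congr 1
    · exact Finset.sum_congr rfl fun i _ => (lin i).2
    · refine Finset.sum_congr rfl fun i _ => ?_
      rw [MeasureTheory.integral_finset_sum _ (fun j hj =>
        (pairlem i j (Finset.mem_filter.mp hj).2).1)]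
      exact Finset.sum_congr rfl fun j hj => (pairlem i j (Finset.mem_filter.mp hj).2).2
  rw [hA, hB]
  -- difference of the linear parts
  have h1 : (∑ i, m {i} * (if i = k then z k else 1/2)) - ∑ i, m {i} * (1/2)
      = m {k} * (z k - 1/2) := by
    rw [← Finset.sum_sub_distrib]
    rw [Finset.sum_congr rfl (fun i _ => show
        m {i} * (if i = k then z k else 1/2) - m {i} * (1/2)
          = if i = k then m {k} * (z k - 1/2) else 0 by
      by_cases h : i = k
      · subst h; simp; ring
      · simp [h])]
    rw [Finset.sum_ite_eq' Finset.univ k (fun _ => m {k} * (z k - 1/2)),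
      if_pos (Finset.mem_univ k)]
  -- difference of the pair parts
  have h2 : (∑ i, ∑ j ∈ Finset.univ.filter (fun j => i < j),
        m {i, j} * (if i = k ∨ j = k then z k - (z k)^2/2 else 1/3))
      - ∑ i, ∑ j ∈ Finset.univ.filter (fun j => i < j), m {i, j} * (1/3)
      = (∑ i ∈ Finset.univ \ {k}, m {k, i}) * (z k - (z k)^2/2 - 1/3) := by
    set E : ℝ := z k - (z k)^2/2 - 1/3 with hE
    rw [← Finset.sum_sub_distrib]
    have step : ∀ i : Fin n,
        (∑ j ∈ Finset.univ.filter (fun j => i < j),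
          m {i, j} * (if i = k ∨ j = k then z k - (z k)^2/2 else 1/3))
        - ∑ j ∈ Finset.univ.filter (fun j => i < j), m {i, j} * (1/3)
        = ∑ j ∈ Finset.univ.filter (fun j => i < j),
            (if i = k ∨ j = k then m {i, j} * E else 0) := by
      intro i
      rw [← Finset.sum_sub_distrib]
      refine Finset.sum_congr rfl fun j _ => ?_
      by_cases h : i = k ∨ j = k
      · simp only [if_pos h, hE]; ring
      · simp only [if_neg h]; ring
    rw [Finset.sum_congr rfl fun i _ => step i]
    -- combinatorial identity
    rw [← Finset.add_sum_erase Finset.univ _ (Finset.mem_univ k)]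
    have e1 : (∑ j ∈ Finset.univ.filter (fun j => k < j),
        (if k = k ∨ j = k then m {k, j} * E else 0))
        = ∑ j ∈ Finset.univ.filter (fun j => k < j), m {k, j} * E := by
      refine Finset.sum_congr rfl fun j _ => ?_
      rw [if_pos (Or.inl rfl)]
    have e2 : (∑ i ∈ Finset.univ.erase k, ∑ j ∈ Finset.univ.filter (fun j => i < j),
        (if i = k ∨ j = k then m {i, j} * E else 0))
        = ∑ i ∈ Finset.univ.erase k, (if i < k then m {k, i} * E else 0) := by
      refine Finset.sum_congr rfl fun i hi => ?_
      have hik : i ≠ k := Finset.ne_of_mem_erase hi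
      have : ∀ j, (if i = k ∨ j = k then m {i, j} * E else 0)
          = (if j = k then m {i, j} * E else 0) := by
        intro j
        by_cases h : j = k
        · rw [if_pos (Or.inr h), if_pos h]
        · rw [if_neg (by tauto), if_neg h]
      rw [Finset.sum_congr rfl fun j _ => this j,
        Finset.sum_ite_eq' _ k (fun j => m {i, j} * E)]
      simp only [Finset.mem_filter, Finset.mem_univ, true_and]
      rw [Finset.pair_comm i k]
    rw [e1, e2]
    have hsd : Finset.univ \ ({k} : Finset (Fin n)) = Finset.univ.erase k := by
      simp [Finset.sdiff_singleton_eq_erase]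
    rw [hsd, Finset.sum_mul]
    rw [← Finset.sum_filter_add_sum_filter_not (Finset.univ.erase k) (fun i => i < k)
      (fun i => m {k, i} * E)]
    have e3 : (Finset.univ.erase k).filter (fun i => ¬ i < k)
        = Finset.univ.filter (fun j => k < j) := by
      ext a
      simp only [Finset.mem_filter, Finset.mem_erase, Finset.mem_univ, true_and, and_true,
        not_lt]
      constructor
      · rintro ⟨hne, hle⟩
        exact lt_of_le_of_ne hle (Ne.symm hne)
      · intro h
        exact ⟨ne_of_gt h, le_of_lt h⟩
    rw [e3]
    have e4 : (∑ i ∈ (Finset.univ.erase k).filter (fun i => i < k), m {k, i} * E)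
        = ∑ i ∈ Finset.univ.erase k, (if i < k then m {k, i} * E else 0) := by
      rw [Finset.sum_filter]
    rw [e4]
    ring
  linear_combination h1 + h2
end
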